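/- arXiv:2106.11950 — 2 statements merged into one kernel-verified Lean document; each statement's English description precedes it below -/
import Mathlib

section
/- With F and R as above: if R(0) ≥ 0 then F'(x) < 0 for all x ∈ (0, β₀), and hence x = 0 is the unique maximizer of F on [0, β₀). -/
open Real Set

/-!
Differentiating, `F'(x) = x (S(x) - 1 / (β₀ - x))` with `S(x) = ∑ ℓ, β_ℓ / (σ_ℓ² (σ_ℓ² + x))`.
Since `S` decreases on `[0, ∞)` and `R(0) = 1 - β₀ S(0)`, the hypothesis `R(0) ≥ 0` gives
`S(x) ≤ S(0) ≤ 1 / β₀ < 1 / (β₀ - x)` for `0 < x < β₀`. Hence `F' < 0` on `(0, β₀)`, and `F`, being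
differentiable on `[0, β₀)`, is strictly decreasing there.
-/

theorem hasDerivAt_log_div_sub {a x : ℝ} (ha : a ≠ 0) (hx : a - x ≠ 0) :
    HasDerivAt (fun y => log (a / (a - y))) (1 / (a - x)) x := by
  refine (((hasDerivAt_const x a).fun_div ((hasDerivAt_id' x).const_sub a) hx).log
    (div_ne_zero ha hx)).congr_deriv ?_
  field_simp
  ring

theorem hasDerivAt_log_one_add_div {c x : ℝ} (hc : c ≠ 0) (hx : c + x ≠ 0) :
    HasDerivAt (fun y => log (1 + y / c)) (1 / (c + x)) x := by
  have hne : 1 + x / c ≠ 0 := by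
    rwa [one_add_div hc, div_ne_zero_iff, and_iff_left hc]
  refine ((((hasDerivAt_id' x).div_const c).const_add 1).log hne).congr_deriv ?_
  field_simp

section Objective

variable {ι : Type*} (β₀ : ℝ) (s : Finset ι) (β σ : ι → ℝ)

noncomputable def objective (x : ℝ) : ℝ :=
  x - β₀ * log (β₀ / (β₀ - x)) + ∑ ℓ ∈ s, (β ℓ * x / σ ℓ ^ 2 - β ℓ * log (1 + x / σ ℓ ^ 2))

noncomputable def weightSum (x : ℝ) : ℝ :=
  ∑ ℓ ∈ s, β ℓ / (σ ℓ ^ 2 * (σ ℓ ^ 2 + x))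

variable {β₀ s β σ}

theorem hasDerivAt_objective {x : ℝ} (hβ₀ : β₀ ≠ 0) (hx : β₀ - x ≠ 0)
    (hσ : ∀ ℓ ∈ s, σ ℓ ≠ 0) (hσx : ∀ ℓ ∈ s, σ ℓ ^ 2 + x ≠ 0) :
    HasDerivAt (objective β₀ s β σ) (x * weightSum s β σ x - x / (β₀ - x)) x := by
  have hterm : ∀ ℓ ∈ s, HasDerivAt (fun y => β ℓ * y / σ ℓ ^ 2 - β ℓ * log (1 + y / σ ℓ ^ 2))
      (x * (β ℓ / (σ ℓ ^ 2 * (σ ℓ ^ 2 + x)))) x := by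
    intro ℓ hℓ
    have hσ2 : σ ℓ ^ 2 ≠ 0 := pow_ne_zero 2 (hσ ℓ hℓ)
    refine ((((hasDerivAt_id' x).const_mul (β ℓ)).div_const (σ ℓ ^ 2)).sub
      ((hasDerivAt_log_one_add_div hσ2 (hσx ℓ hℓ)).const_mul (β ℓ))).congr_deriv ?_
    field_simp [hσ ℓ hℓ, hσx ℓ hℓ]
    ring
  refine (((hasDerivAt_id' x).sub ((hasDerivAt_log_div_sub hβ₀ hx).const_mul β₀)).add
    (HasDerivAt.fun_sum hterm)).congr_deriv ?_
  rw [weightSum, Finset.mul_sum]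
  field_simp
  ring

theorem weightSum_antitoneOn (hβ : ∀ ℓ ∈ s, 0 ≤ β ℓ) (hσ : ∀ ℓ ∈ s, σ ℓ ≠ 0) :
    AntitoneOn (weightSum s β σ) (Ici 0) := by
  intro x hx y hy hxy
  refine Finset.sum_le_sum fun ℓ hℓ => ?_
  have hσ2 : 0 < σ ℓ ^ 2 := sq_pos_of_ne_zero (hσ ℓ hℓ)
  have hx0 : 0 ≤ x := hx
  have := hβ ℓ hℓ
  gcongr

theorem hasDerivAt_objective_of_mem_Ico {x : ℝ} (hσ : ∀ ℓ ∈ s, σ ℓ ≠ 0) (hx : x ∈ Ico 0 β₀) :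
    HasDerivAt (objective β₀ s β σ) (x * weightSum s β σ x - x / (β₀ - x)) x :=
  hasDerivAt_objective (hx.1.trans_lt hx.2).ne' (sub_pos.2 hx.2).ne' hσ
    fun ℓ hℓ => (add_pos_of_pos_of_nonneg (sq_pos_of_ne_zero (hσ ℓ hℓ)) hx.1).ne'

theorem deriv_objective_neg (hβ : ∀ ℓ ∈ s, 0 ≤ β ℓ) (hσ : ∀ ℓ ∈ s, σ ℓ ≠ 0)
    (hS : β₀ * weightSum s β σ 0 ≤ 1) {x : ℝ} (hx : x ∈ Ioo 0 β₀) :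
    deriv (objective β₀ s β σ) x < 0 := by
  rw [(hasDerivAt_objective_of_mem_Ico hσ (Ioo_subset_Ico_self hx)).deriv, sub_neg,
    div_eq_mul_one_div x]
  have hSx : weightSum s β σ x ≤ weightSum s β σ 0 :=
    weightSum_antitoneOn hβ hσ (mem_Ici.2 le_rfl) (mem_Ici.2 hx.1.le) hx.1.le
  have hS0 : weightSum s β σ 0 ≤ 1 / β₀ := by
    rwa [le_div_iff₀' (hx.1.trans hx.2)]
  have hβ₀x : 1 / β₀ < 1 / (β₀ - x) :=
    one_div_lt_one_div_of_lt (sub_pos.2 hx.2) (sub_lt_self β₀ hx.1)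
  exact mul_lt_mul_of_pos_left (hSx.trans_lt (hS0.trans_lt hβ₀x)) hx.1

theorem objective_strictAntiOn (hβ : ∀ ℓ ∈ s, 0 ≤ β ℓ) (hσ : ∀ ℓ ∈ s, σ ℓ ≠ 0)
    (hS : β₀ * weightSum s β σ 0 ≤ 1) : StrictAntiOn (objective β₀ s β σ) (Ico 0 β₀) := by
  refine strictAntiOn_of_deriv_neg (convex_Ico 0 β₀)
    (fun x hx => (hasDerivAt_objective_of_mem_Ico hσ hx).continuousAt.continuousWithinAt)
    fun x hx => ?_
  rw [interior_Ico] at hx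
  exact deriv_objective_neg hβ hσ hS hx

end Objective

theorem stmt_7_general (L : ℕ) (β₀ : ℝ) (hβ₀ : 0 < β₀)
    (β σ : Fin L → ℝ) (hβ : ∀ ℓ, 0 < β ℓ) (hσ : ∀ ℓ, 0 < σ ℓ)
    (F R : ℝ → ℝ)
    (hF : ∀ x ∈ Set.Ico (0 : ℝ) β₀,
      F x = x - β₀ * Real.log (β₀ / (β₀ - x))
        + ∑ ℓ, (β ℓ * x / (σ ℓ) ^ 2 - β ℓ * Real.log (1 + x / (σ ℓ) ^ 2)))
    (hR : ∀ x ∈ Set.Ico (0 : ℝ) β₀,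
      R x = 1 - ∑ ℓ, (β ℓ / (σ ℓ) ^ 2) * ((β₀ - x) / ((σ ℓ) ^ 2 + x)))
    (hR0 : 0 ≤ R 0) :
    (∀ x ∈ Set.Ioo (0 : ℝ) β₀, deriv F x < 0) ∧
    (∀ x ∈ Set.Ico (0 : ℝ) β₀, x ≠ 0 → F x < F 0) := by
  have hFeq : EqOn F (objective β₀ Finset.univ β σ) (Ico 0 β₀) := hF
  have hβ' : ∀ ℓ ∈ Finset.univ, 0 ≤ β ℓ := fun ℓ _ => (hβ ℓ).le
  have hσ' : ∀ ℓ ∈ Finset.univ, σ ℓ ≠ 0 := fun ℓ _ => (hσ ℓ).ne'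
  have hS : β₀ * weightSum Finset.univ β σ 0 ≤ 1 := by
    rw [hR 0 (left_mem_Ico.2 hβ₀), sub_nonneg] at hR0
    convert hR0 using 1
    rw [weightSum, Finset.mul_sum]
    exact Finset.sum_congr rfl fun ℓ _ => by ring
  refine ⟨fun x hx => ?_, fun x hx hx0 => ?_⟩
  · rw [(hFeq.eventuallyEq_of_mem (Ico_mem_nhds hx.1 hx.2)).deriv_eq]
    exact deriv_objective_neg hβ' hσ' hS hx
  · rw [hFeq hx, hFeq (left_mem_Ico.2 hβ₀)]
    exact objective_strictAntiOn hβ' hσ' hS (left_mem_Ico.2 hβ₀) hx (hx.1.lt_of_ne' hx0)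

/-- if `R(0) ≥ 0` then `F' < 0` on `(0, β₀)` and `x = 0` is the unique
maximizer of `F` on `[0, β₀)`. -/
theorem stmt_7 (L : ℕ) (hL : 0 < L) (β₀ : ℝ) (hβ₀ : 0 < β₀)
    (β σ : Fin L → ℝ) (hβ : ∀ ℓ, 0 < β ℓ) (hσ : ∀ ℓ, 0 < σ ℓ)
    (F R : ℝ → ℝ)
    (hF : ∀ x ∈ Set.Ico (0 : ℝ) β₀,
      F x = x - β₀ * Real.log (β₀ / (β₀ - x))
        + ∑ ℓ, (β ℓ * x / (σ ℓ) ^ 2 - β ℓ * Real.log (1 + x / (σ ℓ) ^ 2)))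
    (hR : ∀ x ∈ Set.Ico (0 : ℝ) β₀,
      R x = 1 - ∑ ℓ, (β ℓ / (σ ℓ) ^ 2) * ((β₀ - x) / ((σ ℓ) ^ 2 + x)))
    (hR0 : 0 ≤ R 0) :
    (∀ x ∈ Set.Ioo (0 : ℝ) β₀, deriv F x < 0) ∧
    (∀ x ∈ Set.Ico (0 : ℝ) β₀, x ≠ 0 → F x < F 0) :=
  stmt_7_general L β₀ hβ₀ β σ hβ hσ F R hF hR hR0
end

section
/- Let T be a p×p symmetric positive semidefinite matrix with diagonal vector t, let u be a random vector in ℝᵖ with at most one entry not deterministically zero, and let w ~ N(0, I_p) be independent of u. Then KL(law(T^{1/2} u + w) ‖ law(w)) = KL(law(diag(t)^{1/2} u + w) ‖ law(w)). -/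
open MeasureTheory ProbabilityTheory Matrix

/-- The Kullback-Leibler divergence `D(P‖Q) = ∫ log (dP/dQ) dP`. -/
noncomputable def klReal {α : Type*} [MeasurableSpace α] (P Q : Measure α) : ℝ :=
  ∫ x, Real.log ((P.rnDeriv Q x).toReal) ∂P

/-- The standard Gaussian measure on `ι → ℝ`. -/
noncomputable def stdGaussianPi (ι : Type*) [Fintype ι] : Measure (ι → ℝ) :=
  Measure.pi fun _ => ProbabilityTheory.gaussianReal 0 1

/-! If `u` vanishes off the coordinate `k`, then `A u = u_k • A eₖ` for every matrix `A`. The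
`k`-th columns of `T^{1/2}` and of `diag(t)^{1/2}` both have squared norm `t_k`, so a reflection
`R` maps the second onto the first, and `R (diag(t)^{1/2} u) = T^{1/2} u` almost surely. The law of
`A u + w` is `law(A u) ∗ N(0, I)`, and `R` is linear and fixes `N(0, I)`, so it carries the law of
`diag(t)^{1/2} u + w` to that of `T^{1/2} u + w` while fixing the reference measure. KL divergence
is invariant under such a bijection, since both laws are absolutely continuous with respect to
`N(0, I)`, which is equivalent to Lebesgue measure. -/

lemma MeasurableEmbedding.klReal_map {α β : Type*} [MeasurableSpace α] [MeasurableSpace β]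
    {f : α → β} (hf : MeasurableEmbedding f) {P Q : Measure α} [SigmaFinite P] [SigmaFinite Q]
    (hPQ : P ≪ Q) : klReal (P.map f) (Q.map f) = klReal P Q := by
  unfold klReal
  rw [hf.integral_map]
  refine integral_congr_ae ?_
  filter_upwards [hPQ.ae_le (hf.rnDeriv_map P Q)] with x hx
  rw [hx]

theorem MeasureTheory.Measure.AbsolutelyContinuous.pi_fin :
    ∀ {n : ℕ} {α : Fin n → Type*} [∀ i, MeasurableSpace (α i)] {μ ν : ∀ i, Measure (α i)}
      [∀ i, SigmaFinite (μ i)] [∀ i, SigmaFinite (ν i)],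
      (∀ i, μ i ≪ ν i) → Measure.pi μ ≪ Measure.pi ν
  | 0, _, _, μ, ν, _, _, _ => by rw [Measure.pi_of_empty μ, Measure.pi_of_empty ν]
  | n + 1, α, _, μ, ν, _, _, h => by
    rw [← (measurePreserving_piFinSuccAbove μ 0).symm.map_eq,
      ← (measurePreserving_piFinSuccAbove ν 0).symm.map_eq]
    exact ((h 0).prod (pi_fin fun i => h _)).map (MeasurableEquiv.measurable _)

instance (ι : Type*) [Fintype ι] : IsProbabilityMeasure (stdGaussianPi ι) := by
  unfold stdGaussianPi
  infer_instance

lemma stdGaussianPi_absolutelyContinuous_volume (n : ℕ) :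
    stdGaussianPi (Fin n) ≪ volume := by
  rw [volume_pi]
  exact .pi_fin fun _ => gaussianReal_absolutelyContinuous 0 one_ne_zero

lemma volume_absolutelyContinuous_stdGaussianPi (n : ℕ) :
    volume ≪ stdGaussianPi (Fin n) := by
  rw [volume_pi]
  exact .pi_fin fun _ => gaussianReal_absolutelyContinuous' 0 one_ne_zero

lemma conv_stdGaussianPi_absolutelyContinuous {n : ℕ} (μ : Measure (Fin n → ℝ)) :
    μ ∗ stdGaussianPi (Fin n) ≪ stdGaussianPi (Fin n) :=
  (Measure.conv_absolutelyContinuous (stdGaussianPi_absolutelyContinuous_volume n)).trans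
    (volume_absolutelyContinuous_stdGaussianPi n)

lemma stdGaussianPi_eq_map_stdGaussian (ι : Type*) [Fintype ι] :
    stdGaussianPi ι = (stdGaussian (EuclideanSpace ℝ ι)).map (EuclideanSpace.equiv ι ℝ) := by
  rw [← map_pi_eq_stdGaussian, Measure.map_map (by fun_prop) (by fun_prop)]
  exact Measure.map_id.symm

noncomputable def LinearIsometryEquiv.toPiEquiv {ι : Type*} [Fintype ι]
    (L : EuclideanSpace ℝ ι ≃ₗᵢ[ℝ] EuclideanSpace ℝ ι) : (ι → ℝ) ≃L[ℝ] (ι → ℝ) :=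
  (EuclideanSpace.equiv ι ℝ).symm.trans (L.toContinuousLinearEquiv.trans (EuclideanSpace.equiv ι ℝ))

lemma map_stdGaussianPi_toPiEquiv {ι : Type*} [Fintype ι]
    (L : EuclideanSpace ℝ ι ≃ₗᵢ[ℝ] EuclideanSpace ℝ ι) :
    (stdGaussianPi ι).map L.toPiEquiv = stdGaussianPi ι := by
  have hcomm : L.toPiEquiv ∘ EuclideanSpace.equiv ι ℝ = EuclideanSpace.equiv ι ℝ ∘ L := rfl
  rw [stdGaussianPi_eq_map_stdGaussian, Measure.map_map (by fun_prop) (by fun_prop), hcomm,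
    ← Measure.map_map (by fun_prop) (by fun_prop), stdGaussian_map]

lemma klReal_conv_map_of_map_eq {E : Type*} [NormedAddCommGroup E] [NormedSpace ℝ E]
    [MeasurableSpace E] [BorelSpace E] [SecondCountableTopology E] (e : E ≃L[ℝ] E)
    {μ Q : Measure E} [IsProbabilityMeasure μ] [IsProbabilityMeasure Q] (hQ : Q.map e = Q)
    (hac : μ ∗ Q ≪ Q) : klReal (μ.map e ∗ Q) Q = klReal (μ ∗ Q) Q := by
  have hconv : μ.map e ∗ Q = (μ ∗ Q).map e := by
    have := Measure.map_conv_continuousLinearMap (μ := μ) (ν := Q) (e : E →L[ℝ] E)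
    rw [ContinuousLinearEquiv.coe_coe, hQ] at this
    exact this.symm
  calc klReal (μ.map e ∗ Q) Q = klReal ((μ ∗ Q).map e) (Q.map e) := by rw [hconv, hQ]
    _ = klReal (μ ∗ Q) Q := e.toHomeomorph.measurableEmbedding.klReal_map hac

lemma exists_linearIsometryEquiv_apply_eq {F : Type*} [NormedAddCommGroup F]
    [InnerProductSpace ℝ F] {x y : F} (h : ‖x‖ = ‖y‖) : ∃ L : F ≃ₗᵢ[ℝ] F, L x = y :=
  ⟨_, Submodule.reflection_sub h⟩

lemma Matrix.mulVec_eq_smul_col {m n R : Type*} [Fintype n] [DecidableEq n] [CommSemiring R]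
    (A : Matrix m n R) {x : n → R} {k : n} (hx : ∀ j, j ≠ k → x j = 0) :
    A *ᵥ x = x k • A.col k := by
  have hsingle : x = Pi.single k (x k) := by
    ext j
    rcases eq_or_ne j k with rfl | hj
    · simp
    · simp [hj, hx j hj]
  rw [hsingle, mulVec_single]
  simp

lemma EuclideanSpace.norm_sq_toLp_col {m n : Type*} [Fintype m] (A : Matrix m n ℝ) (k : n) :
    ‖WithLp.toLp 2 (A.col k)‖ ^ 2 = (Aᵀ * A) k k := by
  rw [EuclideanSpace.real_norm_sq_eq]
  simp [Matrix.mul_apply, sq]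

lemma Matrix.transpose_cfc {n : Type*} [Fintype n] [DecidableEq n] (f : ℝ → ℝ)
    (A : Matrix n n ℝ) : (cfc f A)ᵀ = cfc f A := by
  simpa [Matrix.star_eq_conjTranspose] using (cfc_predicate f A).star_eq

lemma Matrix.PosSemidef.cfc_sqrt_mul_self {n : Type*} [Fintype n] [DecidableEq n]
    {T : Matrix n n ℝ} (hT : T.PosSemidef) : cfc Real.sqrt T * cfc Real.sqrt T = T := by
  rw [← cfc_mul Real.sqrt Real.sqrt T]
  conv_rhs => rw [← cfc_id' ℝ T hT.1.isSelfAdjoint]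
  refine cfc_congr fun x hx => Real.mul_self_sqrt ?_
  obtain ⟨i, rfl⟩ := hT.1.spectrum_real_eq_range_eigenvalues ▸ hx
  exact hT.eigenvalues_nonneg i

lemma klReal_map_mulVec_add_eq_of_norm_col_eq {Ω : Type*} [MeasureSpace Ω]
    [IsProbabilityMeasure (ℙ : Measure Ω)] {n : ℕ} {A B : Matrix (Fin n) (Fin n) ℝ} {k : Fin n}
    (hAB : ‖WithLp.toLp 2 (A.col k)‖ = ‖WithLp.toLp 2 (B.col k)‖)
    {u w : Ω → Fin n → ℝ} (hu : Measurable u) (hw : Measurable w)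
    (huzero : ∀ j, j ≠ k → ∀ᵐ ω ∂ℙ, u ω j = 0)
    (hwlaw : Measure.map w ℙ = stdGaussianPi (Fin n)) (huw : IndepFun u w ℙ) :
    klReal (Measure.map (fun ω => A *ᵥ u ω + w ω) ℙ) (Measure.map w ℙ)
      = klReal (Measure.map (fun ω => B *ᵥ u ω + w ω) ℙ) (Measure.map w ℙ) := by
  obtain ⟨L, hL⟩ := exists_linearIsometryEquiv_apply_eq hAB.symm
  have hmulVec : ∀ M : Matrix (Fin n) (Fin n) ℝ, Measurable (M *ᵥ ·) := fun M =>
    (continuous_const.matrix_mulVec continuous_id).measurable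
  have hmeas : ∀ M : Matrix (Fin n) (Fin n) ℝ, Measurable fun ω => M *ᵥ u ω := fun M =>
    (hmulVec M).comp hu
  have hu_single : ∀ᵐ ω ∂ℙ, ∀ j, j ≠ k → u ω j = 0 := ae_all_iff.2 fun j => by
    rcases eq_or_ne j k with rfl | hj
    · exact ae_of_all _ fun _ h => absurd rfl h
    · exact (huzero j hj).mono fun _ h _ => h
  have hconv : ∀ M : Matrix (Fin n) (Fin n) ℝ, Measure.map (fun ω => M *ᵥ u ω + w ω) ℙ
      = Measure.map (fun ω => M *ᵥ u ω) ℙ ∗ stdGaussianPi (Fin n) := fun M => by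
    rw [← hwlaw]
    exact (huw.comp (hmulVec M) measurable_id).map_add_eq_map_conv_map (hmeas M) hw
  have hmap : Measure.map (fun ω => A *ᵥ u ω) ℙ
      = (Measure.map (fun ω => B *ᵥ u ω) ℙ).map L.toPiEquiv := by
    rw [Measure.map_map (by fun_prop) (hmeas B)]
    refine Measure.map_congr ?_
    filter_upwards [hu_single] with ω hω
    simp only [Function.comp_apply, Matrix.mulVec_eq_smul_col _ hω, map_smul]
    exact congrArg (u ω k • WithLp.ofLp ·) hL.symm
  have : IsProbabilityMeasure (Measure.map (fun ω => B *ᵥ u ω) ℙ) :=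
    Measure.isProbabilityMeasure_map (hmeas B).aemeasurable
  rw [hconv, hconv, hmap, hwlaw]
  exact klReal_conv_map_of_map_eq _ (map_stdGaussianPi_toPiEquiv L)
    (conv_stdGaussianPi_absolutelyContinuous _)

/-- for a symmetric PSD matrix `T` with diagonal `t`, a random vector `u`
with at most one entry not deterministically zero, and an independent standard Gaussian
`w ~ N(0, I_p)`,
`KL(law(T^{1/2} u + w) ‖ law(w)) = KL(law(diag(t)^{1/2} u + w) ‖ law(w))`. -/
theorem stmt_15 {Ω : Type*} [MeasureSpace Ω] [IsProbabilityMeasure (ℙ : Measure Ω)]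
    (p : ℕ) (T : Matrix (Fin p) (Fin p) ℝ) (hT : T.PosSemidef)
    (u : Ω → Fin p → ℝ) (w : Ω → Fin p → ℝ) (hu : Measurable u) (hw : Measurable w)
    (k : Fin p) (huzero : ∀ j : Fin p, j ≠ k → ∀ᵐ ω ∂ℙ, u ω j = 0)
    (hwlaw : Measure.map w ℙ = stdGaussianPi (Fin p))
    (huw : IndepFun u w ℙ) :
    klReal (Measure.map (fun ω => (hT.1.eigenvectorUnitary.1 * Matrix.diagonal ((RCLike.ofReal : ℝ → ℝ) ∘ Real.sqrt ∘ hT.1.eigenvalues)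
        * (star hT.1.eigenvectorUnitary : Matrix (Fin p) (Fin p) ℝ)).mulVec (u ω) + w ω) ℙ) (Measure.map w ℙ)
      = klReal
          (Measure.map
            (fun ω => (Matrix.diagonal fun i => Real.sqrt (T i i)).mulVec (u ω) + w ω) ℙ)
          (Measure.map w ℙ) := by
  have hS : hT.1.eigenvectorUnitary.1
      * Matrix.diagonal ((RCLike.ofReal : ℝ → ℝ) ∘ Real.sqrt ∘ hT.1.eigenvalues)
      * (star hT.1.eigenvectorUnitary : Matrix (Fin p) (Fin p) ℝ) = cfc Real.sqrt T := by
    rw [hT.1.cfc_eq, Matrix.IsHermitian.cfc, Unitary.conjStarAlgAut_apply]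
  rw [hS]
  refine klReal_map_mulVec_add_eq_of_norm_col_eq ?_ hu hw huzero hwlaw huw
  rw [← sq_eq_sq₀ (norm_nonneg _) (norm_nonneg _), EuclideanSpace.norm_sq_toLp_col,
    EuclideanSpace.norm_sq_toLp_col, Matrix.transpose_cfc, hT.cfc_sqrt_mul_self]
  simp [Real.mul_self_sqrt hT.diag_nonneg]
end
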